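/- Let T be a rooted tree with leaf set G, let t be any map from the inner vertices of T to a set M, and let m ∈ M. Then the simple graph with vertex set G in which distinct x, y are adjacent if and only if t(lca(x,y)) = m contains no induced path on four vertices (i.e., it is a cograph). -/

import Mathlib

/-- `u` lies on the (unique) path from `v` to the root of the tree `T`. -/
def Anc {V : Type} (T : SimpleGraph V) (root u v : V) : Prop :=
  ∀ p : T.Walk v root, p.IsPath → u ∈ p.support

/-- `w` is the least common ancestor of `x` and `y` in the tree `T` rooted at `root`:
it is a common ancestor and every common ancestor of `x` and `y` is an ancestor of `w`. -/
def IsLCA {V : Type} (T : SimpleGraph V) (root w x y : V) : Prop :=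
  Anc T root w x ∧ Anc T root w y ∧
    ∀ u, Anc T root u x → Anc T root u y → Anc T root u w

/-- `v` is a leaf of the tree `T` rooted at `root`:
a non-root vertex of degree one. -/
def IsLeaf {V : Type} (T : SimpleGraph V) (root v : V) : Prop :=
  v ≠ root ∧ ∃! u, T.Adj v u

/-- The simple graph `G_R` of a (symmetric irreflexive) relation `R`. -/
def relGraph {G : Type} (R : G → G → Prop) : SimpleGraph G where
  Adj x y := x ≠ y ∧ (R x y ∨ R y x)
  symm := ⟨fun _ _ h => ⟨Ne.symm h.1, h.2.symm⟩⟩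
  loopless := ⟨fun _ h => h.1 rfl⟩

/-- A cograph: a simple graph with no induced path on four vertices. -/
def IsCograph {V : Type} (H : SimpleGraph V) : Prop :=
  ¬ ∃ a b c d : V, a ≠ b ∧ a ≠ c ∧ a ≠ d ∧ b ≠ c ∧ b ≠ d ∧ c ≠ d ∧
    H.Adj a b ∧ H.Adj b c ∧ H.Adj c d ∧ ¬ H.Adj a c ∧ ¬ H.Adj a d ∧ ¬ H.Adj b d

/-- The tree `T` rooted at `root` contains the rooted triple `xy|z`:
`x`, `y`, `z` are pairwise distinct leaves and the path from `x` to `y`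
does not intersect the path from `z` to the root. -/
def ContainsTriple {V : Type} (T : SimpleGraph V) (root x y z : V) : Prop :=
  x ≠ y ∧ x ≠ z ∧ y ≠ z ∧
  IsLeaf T root x ∧ IsLeaf T root y ∧ IsLeaf T root z ∧
  ∀ (p : T.Walk x y) (q : T.Walk z root), p.IsPath → q.IsPath →
    ∀ v, v ∈ p.support → v ∉ q.support

/-- The event-labeled tree `(T,t)` (with leaves `ι x`, `x : G`) represents the pairwise
disjoint relations `R 0, …, R (k-1)`: for all distinct `x y : G` and all `i`,
the label of `lca (ι x) (ι y)` equals `i` iff `(x,y) ∈ R i`. -/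
def RepresentsRel {G V : Type} (k : ℕ) (R : Fin k → G → G → Prop)
    (T : SimpleGraph V) (root : V) (ι : G → V) (t : V → Fin k) : Prop :=
  ∀ x y : G, x ≠ y → ∀ w : V, IsLCA T root w (ι x) (ι y) →
    ∀ i : Fin k, (t w = i ↔ R i x y)

/-- There exists an event-labeled tree representing the relations `R 0, …, R (k-1)`:
a rooted tree whose leaf set is exactly `G` (via the injection `ι`) together with an
event labeling `t` such that `t (lca x y) = i ↔ (x,y) ∈ R i` for all distinct `x, y`. -/
def HasEventTree (G : Type) (k : ℕ) (R : Fin k → G → G → Prop) : Prop :=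
  ∃ (V : Type) (T : SimpleGraph V) (root : V) (ι : G → V) (t : V → Fin k),
    T.IsTree ∧ Function.Injective ι ∧
    (∀ v : V, IsLeaf T root v ↔ ∃ g : G, ι g = v) ∧
    RepresentsRel k R T root ι t

/-- Condition (ii): for any three pairwise distinct elements, the three pairs among
them lie in at most two distinct relations. -/
def AtMostTwoColors {G : Type} (k : ℕ) (R : Fin k → G → G → Prop) : Prop :=
  ∀ x y z : G, x ≠ y → x ≠ z → y ≠ z →
    ∀ i j l : Fin k, R i x y → R j x z → R l y z → (i = j ∨ i = l ∨ j = l)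

/-- The triple set `𝒯_{R_1,…,R_k}`: `xy|z` belongs to it iff `x,y,z` are pairwise
distinct, `(x,z)` and `(y,z)` lie in the same relation `R i` and `(x,y)` lies in a
different relation `R j`. -/
def TripleSet {G : Type} (k : ℕ) (R : Fin k → G → G → Prop) (x y z : G) : Prop :=
  x ≠ y ∧ x ≠ z ∧ y ≠ z ∧ ∃ i j : Fin k, i ≠ j ∧ R i x z ∧ R i y z ∧ R j x y

/-- A set of rooted triples (over `G`) is consistent if there is a rooted tree
containing all of them (elements of `G` realized as distinct vertices). -/
def Consistent {G : Type} (Tr : G → G → G → Prop) : Prop :=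
  ∃ (V : Type) (T : SimpleGraph V) (root : V) (ι : G → V),
    T.IsTree ∧ Function.Injective ι ∧
    ∀ x y z : G, Tr x y z → ContainsTriple T root (ι x) (ι y) (ι z)

/-!
The ancestors of a vertex form a chain (its path to the root), so for any three vertices
`x, y, z` two of `lca(x,y)`, `lca(x,z)`, `lca(y,z)` coincide and lie above the third.
For an induced path `a - b - c - d`, where exactly the pairs `ab`, `bc`, `cd` have an lca
labelled `m`, the triples `abc`, `acd`, `abd` give
`lca(a,b) ≥ lca(a,c) = lca(a,d) ≥ lca(a,b)`; hence `lca(a,b) = lca(a,d)`,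
although only one of them is labelled `m`.
-/

open SimpleGraph

namespace SimpleGraph.Walk

variable {V : Type} {G : SimpleGraph V}

theorem exists_append_of_end_mem {v r : V} {s : Set V} (p : G.Walk v r) (hr : r ∈ s) :
    ∃ c ∈ s, ∃ (p₁ : G.Walk v c) (p₂ : G.Walk c r), p = p₁.append p₂ ∧
      ∀ u ∈ p.support, u ∈ s → u ∈ p₂.support := by
  induction p with
  | nil => exact ⟨_, hr, nil, nil, rfl, fun u hu _ => hu⟩
  | @cons a b _ h p ih =>
    by_cases ha : a ∈ s
    · exact ⟨a, ha, nil, cons h p, rfl, fun u hu _ => hu⟩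
    · obtain ⟨c, hc, p₁, p₂, rfl, hfirst⟩ := ih hr
      refine ⟨c, hc, cons h p₁, p₂, rfl, fun u hu hus => ?_⟩
      rcases List.mem_cons.mp (support_cons h _ ▸ hu) with rfl | hu
      · exact absurd hus ha
      · exact hfirst u hu hus

end SimpleGraph.Walk

section RootedTree

variable {V : Type} {T : SimpleGraph V} {root : V}

theorem anc_of_mem_support (hT : T.IsAcyclic) {u v : V} {p : T.Walk v root} (hp : p.IsPath)
    (hu : u ∈ p.support) : Anc T root u v := fun q hq => by
  have : (⟨q, hq⟩ : T.Path v root) = ⟨p, hp⟩ := (hT.subsingleton_path v root).elim _ _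
  rwa [show q = p from congrArg Subtype.val this]

theorem Anc.trans {u v w : V} (hwu : Anc T root w u) (huv : Anc T root u v) :
    Anc T root w v := by
  classical
  intro p hp
  exact p.support_dropUntil_subset_support (huv p hp) (hwu _ (hp.dropUntil (huv p hp)))

theorem Anc.antisymm (hT : T.Connected) {u v : V} (huv : Anc T root u v) (hvu : Anc T root v u) :
    u = v := by
  obtain ⟨p, hp⟩ := hT.preconnected.exists_isPath v root
  obtain ⟨q₁, q₂, rfl⟩ := Walk.mem_support_iff_exists_append.mp (huv p hp)
  obtain ⟨r₁, r₂, rfl⟩ := Walk.mem_support_iff_exists_append.mp (hvu q₂ hp.of_append_right)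
  rw [Walk.append_assoc] at hp
  have hloop := (Walk.isPath_iff_nil.mp hp.of_append_left).length_eq_zero
  rw [Walk.length_append] at hloop
  exact (Walk.eq_of_length_eq_zero (p := q₁) (by omega)).symm

theorem Anc.total (hT : T.IsTree) {u v w : V} (huv : Anc T root u v) (hwv : Anc T root w v) :
    Anc T root u w ∨ Anc T root w u := by
  obtain ⟨p, hp⟩ := hT.connected.preconnected.exists_isPath v root
  obtain ⟨q₁, q₂, rfl⟩ := Walk.mem_support_iff_exists_append.mp (huv p hp)
  rcases (Walk.mem_support_append_iff _ _).mp (hwv _ hp) with hw | hw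
  · obtain ⟨r₁, r₂, rfl⟩ := Walk.mem_support_iff_exists_append.mp hw
    rw [← Walk.append_assoc] at hp
    exact Or.inl (anc_of_mem_support hT.isAcyclic hp.of_append_right
      ((Walk.mem_support_append_iff _ _).mpr (Or.inr q₂.start_mem_support)))
  · exact Or.inr (anc_of_mem_support hT.isAcyclic hp.of_append_right hw)

theorem exists_isLCA (hT : T.IsTree) (x y : V) : ∃ c, IsLCA T root c x y := by
  obtain ⟨p, hp⟩ := hT.connected.preconnected.exists_isPath x root
  obtain ⟨c, hcy, p₁, p₂, rfl, hfirst⟩ :=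
    p.exists_append_of_end_mem (s := {u | Anc T root u y}) fun q _ => q.end_mem_support
  refine ⟨c, anc_of_mem_support hT.isAcyclic hp ?_, hcy, fun u hux huy => ?_⟩
  · exact (Walk.mem_support_append_iff _ _).mpr (Or.inr p₂.start_mem_support)
  · exact anc_of_mem_support hT.isAcyclic hp.of_append_right (hfirst u (hux _ hp) huy)

theorem IsLCA.symm {w x y : V} (h : IsLCA T root w x y) : IsLCA T root w y x :=
  ⟨h.2.1, h.1, fun u hux huy => h.2.2 u huy hux⟩

theorem IsLCA.eq_and_anc_of_anc (hT : T.IsTree) {c₁ c₂ c₃ x y z : V}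
    (h₁ : IsLCA T root c₁ x y) (h₂ : IsLCA T root c₂ x z) (h₃ : IsLCA T root c₃ y z)
    (h₁₂ : Anc T root c₁ c₂) (h₃₁ : c₃ ≠ c₁) : c₁ = c₂ ∧ Anc T root c₁ c₃ := by
  have h₁₃ : Anc T root c₁ c₃ := h₃.2.2 c₁ h₁.2.1 (h₁₂.trans h₂.2.1)
  refine ⟨?_, h₁₃⟩
  rcases Anc.total hT h₂.2.1 h₃.2.1 with h₂₃ | h₃₂
  · exact Anc.antisymm hT.connected h₁₂ (h₁.2.2 c₂ h₂.1 (h₂₃.trans h₃.1))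
  · exact absurd (Anc.antisymm hT.connected (h₁.2.2 c₃ (h₃₂.trans h₂.1) h₃.1) h₁₃) h₃₁

theorem IsLCA.eq_and_anc_of_ne (hT : T.IsTree) {c₁ c₂ c₃ x y z : V}
    (h₁ : IsLCA T root c₁ x y) (h₂ : IsLCA T root c₂ x z) (h₃ : IsLCA T root c₃ y z)
    (h₃₁ : c₃ ≠ c₁) (h₃₂ : c₃ ≠ c₂) : c₁ = c₂ ∧ Anc T root c₁ c₃ := by
  rcases Anc.total hT h₁.1 h₂.1 with h₁₂ | h₂₁
  · exact h₁.eq_and_anc_of_anc hT h₂ h₃ h₁₂ h₃₁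
  · obtain ⟨h₂₁, h₂₃⟩ := h₂.eq_and_anc_of_anc hT h₁ h₃.symm h₂₁ h₃₂
    exact ⟨h₂₁.symm, h₂₁ ▸ h₂₃⟩

end RootedTree

theorem stmt8_general {G V M : Type} (T : SimpleGraph V) (root : V) (hT : T.IsTree)
    (ι : G → V)
    (t : V → M) (m : M) :
    IsCograph (relGraph (fun x y : G =>
      ∃ w : V, IsLCA T root w (ι x) (ι y) ∧ t w = m)) := by
  set H := relGraph fun x y : G => ∃ w : V, IsLCA T root w (ι x) (ι y) ∧ t w = m
  rintro ⟨a, b, c, d, -, hac, had, -, hbd, -, Eab, Ebc, Ecd, Nac, Nad, Nbd⟩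
  have lca_of_adj {x y : G} (hxy : H.Adj x y) : ∃ w, IsLCA T root w (ι x) (ι y) ∧ t w = m := by
    rcases hxy.2 with h | ⟨w, hw, hm⟩
    · exact h
    · exact ⟨w, hw.symm, hm⟩
  have lca_of_not_adj {x y : G} (hxy : x ≠ y) (hn : ¬ H.Adj x y) :
      ∃ w, IsLCA T root w (ι x) (ι y) ∧ t w ≠ m := by
    obtain ⟨w, hw⟩ := exists_isLCA hT (ι x) (ι y)
    exact ⟨w, hw, fun hm => hn ⟨hxy, .inl ⟨w, hw, hm⟩⟩⟩
  have ne_of_label {u w : V} (hu : t u = m) (hw : t w ≠ m) : w ≠ u := fun h => hw (h ▸ hu)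
  obtain ⟨wab, lab, tab⟩ := lca_of_adj Eab
  obtain ⟨wbc, lbc, tbc⟩ := lca_of_adj Ebc
  obtain ⟨wcd, lcd, tcd⟩ := lca_of_adj Ecd
  obtain ⟨wac, lac, tac⟩ := lca_of_not_adj hac Nac
  obtain ⟨wad, lad, tad⟩ := lca_of_not_adj had Nad
  obtain ⟨wbd, lbd, tbd⟩ := lca_of_not_adj hbd Nbd
  have hab_ac : Anc T root wab wac :=
    (lab.symm.eq_and_anc_of_ne hT lbc lac (ne_of_label tab tac) (ne_of_label tbc tac)).2
  have hac_ad : wac = wad :=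
    (lac.eq_and_anc_of_ne hT lad lcd (ne_of_label tcd tac).symm (ne_of_label tcd tad).symm).1
  have had_ab : Anc T root wad wab :=
    (lad.symm.eq_and_anc_of_ne hT lbd.symm lab (ne_of_label tab tad).symm
      (ne_of_label tab tbd).symm).2
  exact tad (Anc.antisymm hT.connected (hac_ad ▸ hab_ac) had_ab ▸ tab)

/-- For any rooted tree `T` with leaf set `G` (realized via the
injection `ι`), any labeling `t` of its (inner) vertices by a set `M`, and any
`m ∈ M`, the graph on `G` with distinct `x, y` adjacent iff `t (lca x y) = m` has no
induced path on four vertices, i.e. it is a cograph. -/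
theorem stmt8 {G V M : Type} (T : SimpleGraph V) (root : V) (hT : T.IsTree)
    (ι : G → V) (hι : Function.Injective ι)
    (hleaves : ∀ v : V, IsLeaf T root v ↔ ∃ g : G, ι g = v)
    (t : V → M) (m : M) :
    IsCograph (relGraph (fun x y : G =>
      ∃ w : V, IsLCA T root w (ι x) (ι y) ∧ t w = m)) :=
  stmt8_general T root hT ι t m
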